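/- Let a history H be a finite sequence of operations, where each operation is a triple consisting of a transaction identifier, an object (record-field) identifier, and a kind (read or write). Two operations at positions i < j of H conflict if they belong to different transactions, access the same object, and at least one of them is a write. The dependency graph of H is the directed graph on transaction identifiers that contains an edge from transaction T to transaction T' (with T ≠ T') whenever some operation of T at position i conflicts with an operation of T' at position j with i < j. H is serial if the operations of each transaction occur contiguously in H. H is (conflict-)serializable if there exists a serial history H' that is a permutation of the operations of H preserving both the relative order of any two operations of the same transaction and the relative order of any two conflicting operations. Theorem: H is serializable if and only if the dependency graph of H is acyclic. -/

import Mathlib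

/-- The kind of a database operation: a read or a write. -/
inductive OpKind where
  | read : OpKind
  | write : OpKind
deriving DecidableEq

/-- An operation: a transaction identifier, an object (record-field)
identifier, and a kind. -/
structure Op where
  txn : ℕ
  obj : ℕ
  kind : OpKind

/-- Two operations conflict if they belong to different transactions, access
the same object, and at least one of them is a write. -/
def conflict (o₁ o₂ : Op) : Prop :=
  o₁.txn ≠ o₂.txn ∧ o₁.obj = o₂.obj ∧ (o₁.kind = OpKind.write ∨ o₂.kind = OpKind.write)

/-- The dependency graph of a history `H`: there is an edge from transaction
`T` to transaction `T'` (with `T ≠ T'`) whenever some operation of `T` at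
position `i` conflicts with an operation of `T'` at position `j` with `i < j`. -/
def depEdge (H : List Op) (T T' : ℕ) : Prop :=
  T ≠ T' ∧ ∃ i j : Fin H.length, (i : ℕ) < (j : ℕ) ∧
    (H.get i).txn = T ∧ (H.get j).txn = T' ∧ conflict (H.get i) (H.get j)

/-- A history is serial when the operations of each transaction occur
contiguously. -/
def serial (H : List Op) : Prop :=
  ∀ i j k : Fin H.length, (i : ℕ) < (j : ℕ) → (j : ℕ) < (k : ℕ) →
    (H.get i).txn = (H.get k).txn → (H.get j).txn = (H.get i).txn

/-- A history `H` is (conflict-)serializable if there is a serial history `H'`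
that is a permutation of the operations of `H` preserving the relative order of
any two operations of the same transaction and the relative order of any two
conflicting operations. -/
def serializable (H : List Op) : Prop :=
  ∃ (H' : List Op) (π : Fin H.length → Fin H'.length),
    serial H' ∧ Function.Bijective π ∧
    (∀ i : Fin H.length, H'.get (π i) = H.get i) ∧
    (∀ i j : Fin H.length, (i : ℕ) < (j : ℕ) → (H.get i).txn = (H.get j).txn →
      ((π i : ℕ) < (π j : ℕ))) ∧
    (∀ i j : Fin H.length, (i : ℕ) < (j : ℕ) → conflict (H.get i) (H.get j) →
      ((π i : ℕ) < (π j : ℕ)))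

/-- A directed graph is acyclic iff no directed (nonempty) cycle exists,
i.e. the transitive closure of the edge relation is irreflexive. -/
def acyclic (H : List Op) : Prop :=
  ∀ T : ℕ, ¬ Relation.TransGen (depEdge H) T T

/-- Rank of a transaction: number of positions whose transaction reaches `T`. -/
noncomputable def rnk (H : List Op) (T : ℕ) : ℕ := by
  classical
  exact (Finset.univ.filter (fun i : Fin H.length =>
    Relation.TransGen (depEdge H) (H.get i).txn T)).card

lemma rnk_lt {H : List Op} (hac : acyclic H) {A B : ℕ}
    (h : Relation.TransGen (depEdge H) A B) : rnk H A < rnk H B := by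
  classical
  obtain ⟨X, hAX, -⟩ := Relation.TransGen.head'_iff.1 h
  obtain ⟨-, i₀, j₀, -, hi₀, -⟩ := hAX
  unfold rnk
  apply Finset.card_lt_card
  constructor
  · intro i hi
    simp only [Finset.mem_filter, Finset.mem_univ, true_and] at hi ⊢
    exact hi.trans h
  · intro hsub
    have hmem : i₀ ∈ Finset.univ.filter (fun i : Fin H.length =>
        Relation.TransGen (depEdge H) (H.get i).txn B) := by
      simp only [Finset.mem_filter, Finset.mem_univ, true_and, hi₀]
      exact h
    have := hsub hmem
    simp only [Finset.mem_filter, Finset.mem_univ, true_and, hi₀] at this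
    exact hac A this

lemma serial_block {H' : List Op} (hs : serial H') {A B : ℕ} (hAB : A ≠ B)
    {a b : Fin H'.length} (hab : (a : ℕ) < (b : ℕ))
    (ha : (H'.get a).txn = A) (hb : (H'.get b).txn = B)
    {p q : Fin H'.length} (hp : (H'.get p).txn = A) (hq : (H'.get q).txn = B) :
    (p : ℕ) < (q : ℕ) := by
  rcases lt_trichotomy (p : ℕ) (q : ℕ) with h | h | h
  · exact h
  · exact absurd (by rw [← hp, Fin.ext h, hq]) hAB
  · exfalso
    rcases lt_trichotomy (a : ℕ) (q : ℕ) with h1 | h1 | h1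
    · have := hs a q p h1 h (by rw [ha, hp])
      exact hAB (by rw [← ha, ← this, hq])
    · exact hAB (by rw [← ha, Fin.ext h1, hq])
    · have := hs q a b h1 hab (by rw [hq, hb])
      exact hAB (by rw [← ha, this, hq])

/-- A history is serializable if and only if its dependency graph is acyclic. -/
theorem serializable_iff_acyclic (H : List Op) :
    serializable H ↔ acyclic H := by
  constructor
  · rintro ⟨H', π, hserial, hbij, hget, -, hconf⟩ T hcyc
    have key : ∀ A B, depEdge H A B → ∀ p q : Fin H'.length,
        (H'.get p).txn = A → (H'.get q).txn = B → (p : ℕ) < (q : ℕ) := by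
      rintro A B ⟨hAB, i, j, hij, hi, hj, hc⟩ p q hp hq
      have hπ : (π i : ℕ) < (π j : ℕ) := hconf i j hij hc
      exact serial_block hserial hAB hπ
        (by rw [hget i, hi]) (by rw [hget j, hj]) hp hq
    have keyT : ∀ A B, Relation.TransGen (depEdge H) A B →
        ∀ p q : Fin H'.length,
        (H'.get p).txn = A → (H'.get q).txn = B → (p : ℕ) < (q : ℕ) := by
      intro A B h
      induction h with
      | single e => exact key _ _ e
      | @tail X Y hT e ih =>
        intro p q hp hq
        obtain ⟨-, i, j, -, hi, -⟩ := id e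
        have hmid : (H'.get (π i)).txn = X := by rw [hget i]; exact hi
        exact lt_trans (ih p (π i) hp hmid) (key _ _ e (π i) q hmid hq)
    obtain ⟨X, hTX, -⟩ := Relation.TransGen.head'_iff.1 hcyc
    obtain ⟨-, i, j, -, hi, -⟩ := hTX
    have hp : (H'.get (π i)).txn = T := by rw [hget i]; exact hi
    exact lt_irrefl _ (keyT T T hcyc (π i) (π i) hp hp)
  · intro hac
    classical
    set key : Fin H.length → ℕ ×ₗ (ℕ ×ₗ ℕ) := fun i =>
      toLex (rnk H (H.get i).txn, toLex ((H.get i).txn, (i : ℕ))) with hkey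
    have key_inj : Function.Injective key := by
      intro a b hab
      have h3 : (ofLex (ofLex (key a)).2).2 = (ofLex (ofLex (key b)).2).2 := by rw [hab]
      exact Fin.ext h3
    set σ := Tuple.sort key with hσ
    have hmono : Monotone (key ∘ σ) := Tuple.monotone_sort key
    have hiff : ∀ a b : Fin H.length, a < b ↔ key (σ a) < key (σ b) := by
      intro a b
      constructor
      · intro h
        rcases lt_or_eq_of_le (hmono h.le) with h' | h'
        · exact h'
        · exact absurd (σ.injective (key_inj h')) h.ne
      · intro h
        by_contra hle
        exact absurd (hmono (not_lt.1 hle)) (not_le.2 h)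
    have hiff' : ∀ i j : Fin H.length,
        ((σ.symm i : ℕ) < (σ.symm j : ℕ)) ↔ key i < key j := by
      intro i j
      have h0 := hiff (σ.symm i) (σ.symm j)
      rw [Equiv.apply_symm_apply, Equiv.apply_symm_apply, Fin.lt_def] at h0
      exact h0
    set hlen := (List.length_ofFn (f := fun k => H.get (σ k)))
    refine ⟨List.ofFn (fun k => H.get (σ k)), fun i =>
      Fin.cast hlen.symm (σ.symm i), ?_, ?_, ?_, ?_, ?_⟩
    case refine_3 =>
      intro i
      rw [List.get_ofFn]
      have : Fin.cast (by simp) (Fin.cast hlen.symm (σ.symm i)) = σ.symm i :=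
        Fin.ext rfl
      rw [this, Equiv.apply_symm_apply]
    case refine_2 =>
      constructor
      · intro a b hab
        dsimp only at hab
        have h3 := congrArg Fin.val hab
        simp only [Fin.coe_cast] at h3
        exact σ.symm.injective (Fin.ext h3)
      · intro k
        refine ⟨σ (Fin.cast hlen k), ?_⟩
        refine Fin.ext ?_
        simp only [Equiv.symm_apply_apply, Fin.coe_cast]
    case refine_1 =>
      intro a b c hab hbc htxn
      have hla : key (σ (Fin.cast hlen a)) < key (σ (Fin.cast hlen b)) := by
        rw [← hiff]; exact hab
      have hlb : key (σ (Fin.cast hlen b)) < key (σ (Fin.cast hlen c)) := by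
        rw [← hiff]; exact hbc
      set a' := σ (Fin.cast hlen a) with ha'
      set b' := σ (Fin.cast hlen b) with hb'
      set c' := σ (Fin.cast hlen c) with hc'
      have ga : ((List.ofFn fun k => H.get (σ k)).get a) = H.get a' := by
        rw [List.get_ofFn]
      have gb : ((List.ofFn fun k => H.get (σ k)).get b) = H.get b' := by
        rw [List.get_ofFn]
      have gc : ((List.ofFn fun k => H.get (σ k)).get c) = H.get c' := by
        rw [List.get_ofFn]
      rw [ga, gc] at htxn
      rw [ga, gb]
      simp only [hkey, Prod.Lex.lt_iff, ofLex_toLex] at hla hlb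
      have hr : rnk H (H.get a').txn = rnk H (H.get c').txn := by rw [htxn]
      omega
    case refine_4 =>
      intro i j hij htxn
      have : key i < key j := by
        simp only [hkey, Prod.Lex.lt_iff, ofLex_toLex]
        right
        refine ⟨by rw [htxn], Or.inr ⟨htxn, hij⟩⟩
      have := (hiff' i j).2 this
      simpa using this
    case refine_5 =>
      intro i j hij hc
      have he : depEdge H (H.get i).txn (H.get j).txn := ⟨hc.1, i, j, hij, rfl, rfl, hc⟩
      have hr := rnk_lt hac (Relation.TransGen.single he)
      have : key i < key j := by
        simp only [hkey, Prod.Lex.lt_iff]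
        exact Or.inl hr
      have := (hiff' i j).2 this
      simpa using this
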